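/- Every n-player cake-cutting instance in class X(k) admits a contiguous allocation whose egalitarian welfare is at least 1/k. -/

import Mathlib

open MeasureTheory Set

/-- An `n`-player cake-cutting instance: continuous nonnegative density functions
on `[0,1]`, each of total integral `1`. -/
structure CakeInstance (n : ℕ) where
  d : Fin n → ℝ → ℝ
  cont : ∀ i, ContinuousOn (d i) (Set.Icc 0 1)
  nonneg : ∀ i, ∀ x ∈ Set.Icc (0:ℝ) 1, 0 ≤ d i x
  total : ∀ i, ∫ x in (0:ℝ)..1, d i x = 1

namespace CakeInstance

/-- Value of player `i` for the interval `[a,b]`. -/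
noncomputable def ival {n : ℕ} (C : CakeInstance n) (i : Fin n) (a b : ℝ) : ℝ :=
  ∫ x in a..b, C.d i x

/-- Value of player `i` for a set `S`. -/
noncomputable def sval {n : ℕ} (C : CakeInstance n) (i : Fin n) (S : Set ℝ) : ℝ :=
  ∫ x in S, C.d i x

end CakeInstance

/-- A contiguous allocation: weakly increasing cut points `x 0 = 0 ≤ … ≤ x n = 1`
together with a permutation `σ` assigning the `j`-th interval `[x j, x (j+1)]`
to player `σ j`. -/
structure ContigAlloc (n : ℕ) where
  x : Fin (n+1) → ℝ
  mono : Monotone x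
  first : x 0 = 0
  last : x (Fin.last n) = 1
  σ : Equiv.Perm (Fin n)

/-- The (closed) interval received by player `i` in a contiguous allocation. -/
def cpiece {n : ℕ} (A : ContigAlloc n) (i : Fin n) : Set ℝ :=
  Set.Icc (A.x (A.σ.symm i).castSucc) (A.x (A.σ.symm i).succ)

/-- Value of player `i` for the interval received by player `j`. -/
noncomputable def cval {n : ℕ} (C : CakeInstance n) (A : ContigAlloc n) (i j : Fin n) : ℝ :=
  C.ival i (A.x (A.σ.symm j).castSucc) (A.x (A.σ.symm j).succ)

/-- Utilitarian welfare of a contiguous allocation. -/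
noncomputable def cWelfare {n : ℕ} (C : CakeInstance n) (A : ContigAlloc n) : ℝ :=
  ∑ i, cval C A i i

/-- Egalitarian welfare of a contiguous allocation. -/
noncomputable def cEgal {n : ℕ} (C : CakeInstance n) (A : ContigAlloc n) : ℝ :=
  ⨅ i, cval C A i i

/-- A contiguous allocation is envy-free if nobody prefers another player's interval. -/
def cEnvyFree {n : ℕ} (C : CakeInstance n) (A : ContigAlloc n) : Prop :=
  ∀ i j, cval C A i j ≤ cval C A i i

/-- A `k`-piece allocation: each player `i` receives the union of (at most) `k`
closed intervals `[lo i m, hi i m] ⊆ [0,1]` (possibly degenerate); all these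
intervals are pairwise non-overlapping and together they cover `[0,1]`. -/
structure KPieceAlloc (n k : ℕ) where
  lo : Fin n → Fin k → ℝ
  hi : Fin n → Fin k → ℝ
  le : ∀ i m, lo i m ≤ hi i m
  sub : ∀ i m, Set.Icc (lo i m) (hi i m) ⊆ Set.Icc (0:ℝ) 1
  nonoverlap : ∀ i m i' m', (i, m) ≠ (i', m') →
      Set.Ioo (lo i m) (hi i m) ∩ Set.Ioo (lo i' m') (hi i' m') = ∅
  cover : (⋃ i, ⋃ m, Set.Icc (lo i m) (hi i m)) = Set.Icc (0:ℝ) 1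

/-- Value of player `i` for the portion received by player `j` in a `k`-piece allocation. -/
noncomputable def kval {n k : ℕ} (C : CakeInstance n) (A : KPieceAlloc n k) (i j : Fin n) : ℝ :=
  ∑ m, C.ival i (A.lo j m) (A.hi j m)

/-- Utilitarian welfare of a `k`-piece allocation. -/
noncomputable def kWelfare {n k : ℕ} (C : CakeInstance n) (A : KPieceAlloc n k) : ℝ :=
  ∑ i, kval C A i i

/-- Egalitarian welfare of a `k`-piece allocation. -/
noncomputable def kEgal {n k : ℕ} (C : CakeInstance n) (A : KPieceAlloc n k) : ℝ :=
  ⨅ i, kval C A i i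

/-- A `k`-piece allocation is envy-free if nobody prefers another player's portion. -/
def kEnvyFree {n k : ℕ} (C : CakeInstance n) (A : KPieceAlloc n k) : Prop :=
  ∀ i j, kval C A i j ≤ kval C A i i

/-- A witness that an `n`-player cake-cutting instance lies in the class `X(k)`:
cut points `0 = c 0 < c 1 < … < c (n*k) = 1` and an ownership map under which each
player owns exactly `k` of the pieces `[c j, c (j+1)]` and values the unowned pieces `0`. -/
structure XkWitness {n : ℕ} (C : CakeInstance n) (k : ℕ) where
  c : Fin (n*k+1) → ℝ
  mono : StrictMono c
  first : c 0 = 0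
  last : c (Fin.last (n*k)) = 1
  owner : Fin (n*k) → Fin n
  ownCount : ∀ i : Fin n, (Finset.univ.filter fun j => owner j = i).card = k
  zeroVal : ∀ (i : Fin n) (j : Fin (n*k)), owner j ≠ i →
      C.ival i (c j.castSucc) (c j.succ) = 0

/-- The `j`-th owned piece, as a set. -/
def XkWitness.pieceSet {n k : ℕ} {C : CakeInstance n} (W : XkWitness C k)
    (j : Fin (n*k)) : Set ℝ :=
  Set.Icc (W.c j.castSucc) (W.c j.succ)

/-- Value of player `i` for the `j`-th owned piece. -/
noncomputable def XkWitness.pieceVal {n k : ℕ} {C : CakeInstance n} (W : XkWitness C k)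
    (i : Fin n) (j : Fin (n*k)) : ℝ :=
  C.ival i (W.c j.castSucc) (W.c j.succ)

/-- A `k`-piece allocation gives each player exactly the pieces he owns:
every owned piece occurs among its owner's allocated intervals. -/
def XkWitness.givesOwnedPieces {n k : ℕ} {C : CakeInstance n} (W : XkWitness C k)
    (A : KPieceAlloc n k) : Prop :=
  ∀ j : Fin (n*k), ∃ m : Fin k,
    A.lo (W.owner j) m = W.c j.castSucc ∧ A.hi (W.owner j) m = W.c j.succ

/-!
Each player values his own `k` pieces at `1` in total, so one of them is worth at least `1/k` to
him. Choosing such a piece for every player gives `n` distinct pieces; listing the players in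
the order of their chosen pieces and cutting the cake into consecutive blocks, each containing
exactly one chosen piece, every player gets an interval containing his piece, hence worth at
least `1/k` to him since densities are nonnegative.
-/

theorem intervalIntegral.sum_integral_adjacent_intervals_fin {f : ℝ → ℝ} {N : ℕ}
    {c : Fin (N + 1) → ℝ}
    (hint : ∀ j : Fin N, IntervalIntegrable f volume (c j.castSucc) (c j.succ)) :
    ∑ j : Fin N, ∫ x in c j.castSucc..c j.succ, f x = ∫ x in c 0..c (Fin.last N), f x := by
  set a : ℕ → ℝ := fun t => c ⟨min t N, by omega⟩
  have ha : ∀ t (ht : t ≤ N), a t = c ⟨t, by omega⟩ := fun t ht =>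
    congrArg c (Fin.ext (min_eq_left ht))
  calc ∑ j : Fin N, ∫ x in c j.castSucc..c j.succ, f x
      = ∑ j : Fin N, ∫ x in a j..a (j + 1), f x := by
        refine Finset.sum_congr rfl fun j _ => ?_
        rw [ha j j.is_lt.le, ha (j + 1) j.is_lt]; rfl
    _ = ∫ x in a 0..a N, f x := by
        rw [Fin.sum_univ_eq_sum_range (fun t => ∫ x in a t..a (t + 1), f x)]
        refine sum_integral_adjacent_intervals fun t ht => ?_
        rw [ha t ht.le, ha (t + 1) ht]
        exact hint ⟨t, ht⟩
    _ = ∫ x in c 0..c (Fin.last N), f x := by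
        rw [ha 0 (Nat.zero_le N), ha N le_rfl]; rfl

theorem Fin.exists_monotone_partition_of_strictMono {n N : ℕ} (hn : n ≠ 0) {p : Fin n → Fin N}
    (hp : StrictMono p) :
    ∃ g : Fin (n + 1) → Fin (N + 1), Monotone g ∧ g 0 = 0 ∧ g (Fin.last n) = Fin.last N ∧
      ∀ m, g m.castSucc ≤ (p m).castSucc ∧ (p m).succ ≤ g m.succ := by
  -- block `m` ends right after cell `p m`, except that the last block ends at `N`
  let g : Fin (n + 1) → Fin (N + 1) := fun t =>
    if t = Fin.last n then Fin.last N
    else Fin.cases (motive := fun _ => Fin (N + 1)) 0 (fun m => (p m).succ) t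
  have hbound : ∀ m, g m.castSucc ≤ (p m).castSucc ∧ (p m).succ ≤ g m.succ := by
    intro m
    constructor
    · rcases Fin.eq_zero_or_eq_succ m.castSucc with h | ⟨j, hj⟩
      · simp [g, h, hn]
      · have hjm : j < m := Fin.succ_le_castSucc_iff.1 hj.ge
        have hj_ne : j.succ ≠ Fin.last n := hj ▸ Fin.castSucc_ne_last m
        simp only [g, hj, if_neg hj_ne, Fin.cases_succ]
        exact Fin.succ_le_castSucc_iff.2 (hp hjm)
    · by_cases h : m.succ = Fin.last n
      · simp [g, h, Fin.le_last]
      · simp [g, h]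
  refine ⟨g, Fin.monotone_iff_le_succ.2 fun m => ?_, by simp [g, hn], by simp [g], hbound⟩
  exact (hbound m).1.trans ((Fin.castSucc_le_succ _).trans (hbound m).2)

namespace CakeInstance

variable {n : ℕ} (C : CakeInstance n) (i : Fin n)

theorem intervalIntegrable {a b : ℝ} (ha : a ∈ Icc (0 : ℝ) 1) (hb : b ∈ Icc (0 : ℝ) 1) :
    IntervalIntegrable (C.d i) volume a b :=
  ((C.cont i).mono (uIcc_subset_Icc ha hb)).intervalIntegrable

theorem ival_le_of_Icc_subset {a b a' b' : ℝ} (hab' : a' ≤ b') (hsub : Icc a' b' ⊆ Icc a b)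
    (h01 : Icc a b ⊆ Icc 0 1) : C.ival i a' b' ≤ C.ival i a b := by
  obtain ⟨ha, hb⟩ := (Icc_subset_Icc_iff hab').1 hsub
  have hab : a ≤ b := ha.trans (hab'.trans hb)
  obtain ⟨h0, h1⟩ := (Icc_subset_Icc_iff hab).1 h01
  refine intervalIntegral.integral_mono_interval ha hab' hb ?_
    (C.intervalIntegrable i ⟨h0, hab.trans h1⟩ ⟨h0.trans hab, h1⟩)
  filter_upwards [ae_restrict_mem measurableSet_Ioc] with y hy
  exact C.nonneg i y ⟨h0.trans hy.1.le, hy.2.trans h1⟩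

end CakeInstance

theorem ContigAlloc.cpiece_subset {n : ℕ} (A : ContigAlloc n) (i : Fin n) :
    cpiece A i ⊆ Icc 0 1 := by
  rw [← A.first, ← A.last]
  exact Icc_subset_Icc (A.mono (Fin.zero_le _)) (A.mono (Fin.le_last _))

theorem ContigAlloc.exists_Icc_subset_cpiece {n N : ℕ} (hn : n ≠ 0) {c : Fin (N + 1) → ℝ}
    (hc : Monotone c) (h0 : c 0 = 0) (h1 : c (Fin.last N) = 1) {f : Fin n → Fin N}
    (hf : Function.Injective f) :
    ∃ A : ContigAlloc n, ∀ i, Icc (c (f i).castSucc) (c (f i).succ) ⊆ cpiece A i := by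
  set σ := Tuple.sort f
  have hp : StrictMono (f ∘ σ) :=
    (Tuple.monotone_sort f).strictMono_of_injective (hf.comp σ.injective)
  obtain ⟨g, hg, hg0, hglast, hbound⟩ := Fin.exists_monotone_partition_of_strictMono hn hp
  refine ⟨⟨c ∘ g, hc.comp hg, by simp [hg0, h0], by simp [hglast, h1], σ⟩, fun i => ?_⟩
  obtain ⟨hlo, hhi⟩ := hbound (σ.symm i)
  simp only [Function.comp_apply, Equiv.apply_symm_apply] at hlo hhi
  exact Icc_subset_Icc (hc hlo) (hc hhi)

namespace XkWitness

variable {n k : ℕ} {C : CakeInstance n} (W : XkWitness C k)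

theorem c_mem (j : Fin (n * k + 1)) : W.c j ∈ Icc (0 : ℝ) 1 := by
  rw [← W.first, ← W.last]
  exact ⟨W.mono.monotone (Fin.zero_le j), W.mono.monotone (Fin.le_last j)⟩

theorem mul_ne_zero (W : XkWitness C k) : n * k ≠ 0 := by
  intro h
  have h01 := W.last
  rw [show Fin.last (n * k) = 0 from Fin.ext h, W.first] at h01
  exact zero_ne_one h01

theorem sum_pieceVal (i : Fin n) : ∑ j, W.pieceVal i j = 1 := by
  rw [← C.total i, ← W.first, ← W.last]
  exact intervalIntegral.sum_integral_adjacent_intervals_fin fun j =>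
    C.intervalIntegrable i (W.c_mem _) (W.c_mem _)

theorem sum_pieceVal_owned (i : Fin n) :
    ∑ j with W.owner j = i, W.pieceVal i j = 1 := by
  rw [Finset.sum_filter_of_ne (f := W.pieceVal i) fun j _ h =>
    by_contra fun hj => h (W.zeroVal i j hj)]
  exact W.sum_pieceVal i

theorem exists_owned_pieceVal_ge (i : Fin n) :
    ∃ j, W.owner j = i ∧ (1 : ℝ) / k ≤ W.pieceVal i j := by
  have hk : k ≠ 0 := right_ne_zero_of_mul W.mul_ne_zero
  have hne : (Finset.univ.filter fun j => W.owner j = i).Nonempty :=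
    Finset.card_pos.1 ((W.ownCount i).symm ▸ Nat.pos_of_ne_zero hk)
  have hsum :
      ∑ _j with W.owner _j = i, (1 : ℝ) / k = ∑ j with W.owner j = i, W.pieceVal i j := by
    rw [Finset.sum_const, W.ownCount i, W.sum_pieceVal_owned, nsmul_eq_mul, mul_one_div,
      div_self (Nat.cast_ne_zero.2 hk)]
  obtain ⟨j, hj, hle⟩ := Finset.exists_le_of_sum_le hne hsum.le
  exact ⟨j, (Finset.mem_filter.1 hj).2, hle⟩

end XkWitness

theorem egalitarian_lower_bound_Xk_general (n k : ℕ) (C : CakeInstance n)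
    (W : XkWitness C k) :
    ∃ A : ContigAlloc n, (∀ i, (1:ℝ)/k ≤ cval C A i i) ∧ (1:ℝ)/k ≤ cEgal C A := by
  have hn : n ≠ 0 := left_ne_zero_of_mul W.mul_ne_zero
  choose f hf_owner hf_val using W.exists_owned_pieceVal_ge
  have hf : Function.Injective f := fun i i' h => by rw [← hf_owner i, ← hf_owner i', h]
  obtain ⟨A, hA⟩ := ContigAlloc.exists_Icc_subset_cpiece hn W.mono.monotone W.first W.last hf
  have hval : ∀ i, (1 : ℝ) / k ≤ cval C A i i := fun i =>
    (hf_val i).trans (C.ival_le_of_Icc_subset i (W.mono.monotone (Fin.castSucc_le_succ _))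
      (hA i) (A.cpiece_subset i))
  have : Nonempty (Fin n) := ⟨⟨0, Nat.pos_of_ne_zero hn⟩⟩
  exact ⟨A, hval, le_ciInf hval⟩

/-- Every `n`-player instance in `X(k)` admits a contiguous allocation
with egalitarian welfare at least `1/k`. -/
theorem egalitarian_lower_bound_Xk (n k : ℕ) (hn : 1 ≤ n) (C : CakeInstance n)
    (W : XkWitness C k) :
    ∃ A : ContigAlloc n, (∀ i, (1:ℝ)/k ≤ cval C A i i) ∧ (1:ℝ)/k ≤ cEgal C A :=
  egalitarian_lower_bound_Xk_general n k C W
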